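/- Let X be a Banach space, r₀ > 0, k ≥ 1, and V₁,…,V_k analytic vector fields on X with [[V_a]](r) < ∞ for all r < r₀. For any r ∈ (0, r₀) and any formal series f with [[f]]^(k)(r) < ∞, the iterated derivation satisfies [[V_k· ⋯ V₁· f]](r) ≤ ([[V_k]]· ⋯ [[V₁]]· [[f]])(r), where for a nonnegative power series A(z), the operator [[V_a]]· acts by ([[V_a]]·A)(z) := [[V_a]](z)·A'(z). -/

import Mathlib

/-!
Write `[[g]]` for the power series with coefficients `‖g p‖`. A symmetric multilinear map is
determined by its values on the diagonal (polarization), so the `m`-th component of `V·g`, which is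
only prescribed on the diagonal, is the symmetrization of `∑ₙ (n + 1) gₙ₊₁(Vₘ₋ₙ(·), ·)`.
Symmetrization does not increase norms, hence `‖(V·g)^(m)‖` is at most the `m`-th coefficient of
`[[V]]·[[g]] = [[V]] [[g]]'`, and by induction `V_k⋯V₁·f` is dominated coefficientwise by
`[[V_k]]·⋯[[V₁]]·[[f]]`.

This majorant converges at `r`: absolute convergence at `r` of all derivatives up to order `d` is
preserved by products (Leibniz rule), every `[[V_a]]` has it for all `d` because `r < r₀`, and each
application of some `[[V_a]]·` uses up one derivative, which the `k` derivatives of `[[f]]` supply.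
-/

/-- The action of the scalar vector field with coefficients `x` on a power
series with coefficients `A`: coefficients of `X(z)·A'(z)`. -/
noncomputable def applyDCoeff (x A : ℕ → ℝ) : ℕ → ℝ :=
  fun m => ∑ p ∈ Finset.range (m + 2), (p : ℝ) * x (m + 1 - p) * A p

/-- Iterated action: coefficients of `[[V_a]]·⋯[[V_1]]·[[f]]`. -/
noncomputable def iterCoeff (x : ℕ → ℕ → ℝ) (A : ℕ → ℝ) : ℕ → (ℕ → ℝ)
  | 0 => A
  | (a + 1) => applyDCoeff (x a) (iterCoeff x A a)

open Finset

theorem Finset.sum_disjoint_neg_one_pow_card {α : Type*} [Fintype α] [DecidableEq α]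
    (s : Finset α) :
    ∑ t : Finset α, (if Disjoint t s then (-1 : ℤ) ^ #t else 0) = if s = univ then 1 else 0 := by
  have : univ.filter (fun t : Finset α => Disjoint t s) = sᶜ.powerset := by
    ext t; simp [subset_compl_iff_disjoint_right]
  rw [← sum_filter, this, sum_powerset_neg_one_pow_card]
  exact if_congr (compl_eq_empty_iff s) rfl rfl

theorem Fintype.sum_ite_surjective_eq_sum_perm {α M : Type*} [Fintype α] [DecidableEq α]
    [AddCommMonoid M] (F : (α → α) → M) :
    ∑ g : α → α, (if Function.Surjective g then F g else 0) = ∑ σ : Equiv.Perm α, F σ := by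
  have : univ.filter (fun g : α → α => Function.Surjective g) =
      univ.map ⟨fun σ : Equiv.Perm α => ⇑σ, DFunLike.coe_injective⟩ := by
    ext g
    simp only [mem_filter, mem_univ, true_and, mem_map, Function.Embedding.coeFn_mk]
    exact ⟨fun hg => ⟨Equiv.ofBijective g (Finite.surjective_iff_bijective.1 hg), rfl⟩,
      fun ⟨σ, hσ⟩ => hσ ▸ σ.surjective⟩
  rw [← sum_filter, this, sum_map]
  rfl

theorem Finset.sum_range_natCast_smul_eq_sum_fin_succ {M : Type*} [AddCommGroup M] [Module ℝ M]
    (h : ℕ → M) (m : ℕ) :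
    ∑ p ∈ range (m + 2), (p : ℝ) • h p = ∑ n : Fin (m + 1), ((n : ℝ) + 1) • h (n + 1) := by
  rw [sum_range_succ', Fin.sum_univ_eq_sum_range (fun n => ((n : ℝ) + 1) • h (n + 1))]
  simp

theorem Fin.ite_val_eq_zero_eq_cons {α : Type*} {n : ℕ} (a b : α) :
    (fun i : Fin (n + 1) => if (i : ℕ) = 0 then a else b) = Fin.cons a fun _ => b := by
  funext i
  refine Fin.cases ?_ (fun j => ?_) i <;> simp

namespace MultilinearMap

variable {R M N : Type*} [CommSemiring R] [AddCommMonoid M] [AddCommGroup N] [Module R M]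
  [Module R N] {m : ℕ}

theorem factorial_smul_apply_eq_sum_diag (T : MultilinearMap R (fun _ : Fin m => M) N)
    (hT : ∀ (σ : Equiv.Perm (Fin m)) (φ : Fin m → M), T (fun i => φ (σ i)) = T φ)
    (φ : Fin m → M) :
    m.factorial • T φ = ∑ t : Finset (Fin m), (-1 : ℤ) ^ #t • T (fun _ => ∑ i ∈ tᶜ, φ i) := by
  symm
  calc ∑ t : Finset (Fin m), (-1 : ℤ) ^ #t • T (fun _ => ∑ i ∈ tᶜ, φ i)
      = ∑ t : Finset (Fin m), ∑ g : Fin m → Fin m,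
          (if Disjoint t (univ.image g) then (-1 : ℤ) ^ #t else 0) • T (fun i => φ (g i)) := by
        refine sum_congr rfl fun t _ => ?_
        simp only [T.map_sum_finset, smul_sum, ite_smul, zero_smul, ← sum_filter]
        congr 1
        ext g
        simp [disjoint_right]
    _ = ∑ g : Fin m → Fin m, (if Function.Surjective g then T (fun i => φ (g i)) else 0) := by
        rw [sum_comm]
        refine sum_congr rfl fun g _ => ?_
        have hsurj : univ.image g = univ ↔ Function.Surjective g := by
          simp [eq_univ_iff_forall, Function.Surjective]
        rw [← sum_smul, sum_disjoint_neg_one_pow_card, if_congr hsurj rfl rfl]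
        split_ifs <;> simp
    _ = ∑ σ : Equiv.Perm (Fin m), T (fun i => φ (σ i)) :=
        Fintype.sum_ite_surjective_eq_sum_perm (fun g => T (fun i => φ (g i)))
    _ = m.factorial • T φ := by
        simp only [hT, sum_const, card_univ, Fintype.card_perm, Fintype.card_fin]

end MultilinearMap

namespace ContinuousMultilinearMap

variable {E F : Type*} [NormedAddCommGroup E] [NormedSpace ℝ E] [NormedAddCommGroup F]
  [NormedSpace ℝ F] {m : ℕ}

theorem eq_of_symmetric_of_diag_eq {T S : ContinuousMultilinearMap ℝ (fun _ : Fin m => E) F}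
    (hT : ∀ (σ : Equiv.Perm (Fin m)) (φ : Fin m → E), T (fun i => φ (σ i)) = T φ)
    (hS : ∀ (σ : Equiv.Perm (Fin m)) (φ : Fin m → E), S (fun i => φ (σ i)) = S φ)
    (h : ∀ x, T (fun _ => x) = S (fun _ => x)) : T = S := by
  ext φ
  have hfac : m.factorial • T φ = m.factorial • S φ := by
    rw [← coe_coe, T.toMultilinearMap.factorial_smul_apply_eq_sum_diag hT,
      ← coe_coe, S.toMultilinearMap.factorial_smul_apply_eq_sum_diag hS]
    simp only [coe_coe, h]
  rw [← Nat.cast_smul_eq_nsmul ℝ, ← Nat.cast_smul_eq_nsmul ℝ] at hfac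
  exact smul_right_injective F (by positivity) hfac

noncomputable def symmetrize (T : ContinuousMultilinearMap ℝ (fun _ : Fin m => E) F) :
    ContinuousMultilinearMap ℝ (fun _ : Fin m => E) F :=
  (m.factorial : ℝ)⁻¹ • ∑ σ : Equiv.Perm (Fin m), T.domDomCongr σ

theorem symmetrize_apply (T : ContinuousMultilinearMap ℝ (fun _ : Fin m => E) F)
    (φ : Fin m → E) :
    T.symmetrize φ = (m.factorial : ℝ)⁻¹ • ∑ σ : Equiv.Perm (Fin m), T (fun i => φ (σ i)) := by
  simp [symmetrize]

theorem symmetrize_apply_perm (T : ContinuousMultilinearMap ℝ (fun _ : Fin m => E) F)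
    (τ : Equiv.Perm (Fin m)) (φ : Fin m → E) :
    T.symmetrize (fun i => φ (τ i)) = T.symmetrize φ := by
  rw [symmetrize_apply, symmetrize_apply]
  congr 1
  exact Fintype.sum_bijective (τ * ·) (Group.mulLeft_bijective τ) _ _ fun _ => rfl

theorem symmetrize_apply_diag (T : ContinuousMultilinearMap ℝ (fun _ : Fin m => E) F) (x : E) :
    T.symmetrize (fun _ => x) = T (fun _ => x) := by
  rw [symmetrize_apply, sum_const, card_univ, Fintype.card_perm, Fintype.card_fin,
    ← Nat.cast_smul_eq_nsmul ℝ, smul_smul, inv_mul_cancel₀ (by positivity), one_smul]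

theorem norm_symmetrize_le (T : ContinuousMultilinearMap ℝ (fun _ : Fin m => E) F) :
    ‖T.symmetrize‖ ≤ ‖T‖ := by
  calc ‖T.symmetrize‖ ≤ (m.factorial : ℝ)⁻¹ * ∑ σ : Equiv.Perm (Fin m), ‖T.domDomCongr σ‖ := by
        rw [symmetrize]
        refine (opNorm_smul_le _ _).trans ?_
        rw [norm_inv, RCLike.norm_natCast]
        gcongr
        exact norm_sum_le _ _
    _ = ‖T‖ := by
        simp only [norm_domDomCongr, sum_const, card_univ, Fintype.card_perm, Fintype.card_fin,
          nsmul_eq_mul]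
        field_simp

/-- `(x₁, …, x_{j+n}) ↦ g (w x₁ … x_j) x_{j+1} … x_{j+n}`. -/
noncomputable def compFirst {n j : ℕ}
    (g : ContinuousMultilinearMap ℝ (fun _ : Fin (n + 1) => E) F)
    (w : ContinuousMultilinearMap ℝ (fun _ : Fin j => E) E) :
    ContinuousMultilinearMap ℝ (fun _ : Fin (j + n) => E) F :=
  (g.curryLeft.compContinuousMultilinearMap w).uncurrySum.domDomCongr finSumFinEquiv

theorem compFirst_apply_diag {n j : ℕ}
    (g : ContinuousMultilinearMap ℝ (fun _ : Fin (n + 1) => E) F)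
    (w : ContinuousMultilinearMap ℝ (fun _ : Fin j => E) E) (x : E) :
    g.compFirst w (fun _ => x) = g (Fin.cons (w fun _ => x) fun _ => x) :=
  rfl

theorem norm_compFirst_le {n j : ℕ}
    (g : ContinuousMultilinearMap ℝ (fun _ : Fin (n + 1) => E) F)
    (w : ContinuousMultilinearMap ℝ (fun _ : Fin j => E) E) :
    ‖g.compFirst w‖ ≤ ‖g‖ * ‖w‖ := by
  have huncurry : ‖(g.curryLeft.compContinuousMultilinearMap w).uncurrySum‖ =
      ‖g.curryLeft.compContinuousMultilinearMap w‖ :=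
    (currySumEquiv ℝ (Fin j) (Fin n) E F).symm.norm_map _
  rw [compFirst, norm_domDomCongr, ← curryLeft_norm, huncurry]
  exact ContinuousLinearMap.norm_compContinuousMultilinearMap_le _ _

theorem norm_le_of_diag_eq_derivation (g : FormalMultilinearSeries ℝ E F)
    (v : FormalMultilinearSeries ℝ E E) {T : ContinuousMultilinearMap ℝ (fun _ : Fin m => E) F}
    (hT : ∀ (σ : Equiv.Perm (Fin m)) (φ : Fin m → E), T (fun i => φ (σ i)) = T φ)
    (hdiag : ∀ x : E, T (fun _ => x) = ∑ p ∈ range (m + 2),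
      (p : ℝ) • g p (fun i => if (i : ℕ) = 0 then v (m + 1 - p) (fun _ => x) else x)) :
    ‖T‖ ≤ ∑ p ∈ range (m + 2), (p : ℝ) * ‖v (m + 1 - p)‖ * ‖g p‖ := by
  -- `m + 1 - (n + 1)` rather than `m - n`: the index occurs in the type of `v _`, so the two
  -- cannot be interchanged by rewriting once `v _` is applied.
  set S : ContinuousMultilinearMap ℝ (fun _ : Fin m => E) F :=
    ∑ n : Fin (m + 1), ((n : ℝ) + 1) •
      ((g (n + 1)).compFirst (v (m + 1 - (n + 1)))).domDomCongr
        (finCongr (by have := n.is_lt; omega))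
  have hTS : T = S.symmetrize := by
    refine eq_of_symmetric_of_diag_eq hT (symmetrize_apply_perm S) fun x => ?_
    simp only [symmetrize_apply_diag, hdiag, sum_range_natCast_smul_eq_sum_fin_succ, S,
      _root_.sum_apply, smul_apply, domDomCongr_apply, compFirst_apply_diag,
      Fin.ite_val_eq_zero_eq_cons]
  calc ‖T‖ ≤ ‖S‖ := hTS ▸ norm_symmetrize_le S
    _ ≤ ∑ n : Fin (m + 1), ((n : ℝ) + 1) * (‖g (n + 1)‖ * ‖v (m + 1 - (n + 1))‖) := by
        refine (norm_sum_le _ _).trans (sum_le_sum fun n _ => ?_)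
        refine (opNorm_smul_le _ _).trans ?_
        rw [norm_domDomCongr, Real.norm_of_nonneg (by positivity)]
        gcongr
        exact norm_compFirst_le _ _
    _ = ∑ p ∈ range (m + 2), (p : ℝ) • (‖g p‖ * ‖v (m + 1 - p)‖) :=
        (sum_range_natCast_smul_eq_sum_fin_succ (fun p => ‖g p‖ * ‖v (m + 1 - p)‖) m).symm
    _ = ∑ p ∈ range (m + 2), (p : ℝ) * ‖v (m + 1 - p)‖ * ‖g p‖ :=
        sum_congr rfl fun p _ => by rw [smul_eq_mul]; ring

end ContinuousMultilinearMap

theorem norm_le_iterCoeff {E F : Type*} [NormedAddCommGroup E] [NormedSpace ℝ E]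
    [NormedAddCommGroup F] [NormedSpace ℝ F] (V : ℕ → FormalMultilinearSeries ℝ E E)
    (fs : ℕ → FormalMultilinearSeries ℝ E F) {k : ℕ}
    (hsym : ∀ a ≤ k, ∀ (m : ℕ) (σ : Equiv.Perm (Fin m)) (φ : Fin m → E),
      fs a m (fun i => φ (σ i)) = fs a m φ)
    (hstep : ∀ a < k, ∀ (m : ℕ) (x : E), fs (a + 1) m (fun _ => x) =
      ∑ p ∈ range (m + 2),
        (p : ℝ) • fs a p (fun i => if (i : ℕ) = 0 then V a (m + 1 - p) (fun _ => x) else x)) :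
    ∀ a ≤ k, ∀ m, ‖fs a m‖ ≤ iterCoeff (fun a q => ‖V a q‖) (fun p => ‖fs 0 p‖) a m := by
  intro a
  induction a with
  | zero => exact fun _ _ => le_rfl
  | succ a ih =>
    intro ha m
    refine (ContinuousMultilinearMap.norm_le_of_diag_eq_derivation (fs a) (V a)
      (hsym (a + 1) ha m) (hstep a ha m)).trans (sum_le_sum fun p _ => ?_)
    gcongr
    exact ih (by omega) p

open PowerSeries

theorem mk_applyDCoeff (x A : ℕ → ℝ) : mk (applyDCoeff x A) = mk x * d⁄dX ℝ (mk A) := by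
  ext m
  rw [coeff_mk, coeff_mul, applyDCoeff, sum_range_succ', Nat.sum_antidiagonal_eq_sum_range_succ
    (fun i j => coeff i (mk x) * coeff j (d⁄dX ℝ (mk A))), ← sum_range_reflect]
  simp only [coeff_mk, coeff_derivative, Nat.cast_zero, zero_mul, add_zero]
  refine sum_congr rfl fun n hn => ?_
  rw [mem_range] at hn
  rw [show m + 1 - 1 - n = m - n by omega, show m + 1 - (m - n + 1) = n by omega]
  push_cast
  ring

namespace PowerSeries

/-- For `r > 0` and nonnegative coefficients this is the paper's `[[f]](r) < ∞`. -/
def AbsSummableAt (f : ℝ⟦X⟧) (r : ℝ) : Prop :=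
  Summable fun n => ‖coeff n f * r ^ n‖

namespace AbsSummableAt

variable {f g : ℝ⟦X⟧} {r : ℝ}

theorem add (hf : AbsSummableAt f r) (hg : AbsSummableAt g r) : AbsSummableAt (f + g) r :=
  (Summable.add hf hg).of_nonneg_of_le (fun _ => norm_nonneg _) fun n => by
    simpa only [map_add, add_mul] using norm_add_le _ _

theorem mul (hf : AbsSummableAt f r) (hg : AbsSummableAt g r) : AbsSummableAt (f * g) r := by
  refine (summable_norm_sum_mul_antidiagonal_of_summable_norm (f := fun n => coeff n f * r ^ n)
    (g := fun n => coeff n g * r ^ n) hf hg).congr fun n => ?_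
  rw [coeff_mul, sum_mul]
  congr 1
  refine sum_congr rfl fun ij hij => ?_
  rw [← mem_antidiagonal.1 hij, pow_add]
  ring

theorem of_derivative (hf : AbsSummableAt (d⁄dX ℝ f) r) : AbsSummableAt f r := by
  refine (summable_nat_add_iff 1).1 <| (Summable.mul_left ‖r‖ hf).of_nonneg_of_le
    (fun _ => norm_nonneg _) fun n => ?_
  have hn : (1 : ℝ) ≤ ‖((n : ℝ) + 1)‖ := by
    rw [Real.norm_of_nonneg (by positivity)]; linarith [n.cast_nonneg (α := ℝ)]
  calc ‖coeff (n + 1) f * r ^ (n + 1)‖ = ‖r‖ * (‖coeff (n + 1) f * r ^ n‖ * 1) := by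
        rw [pow_succ, norm_mul, norm_mul, norm_mul]; ring
    _ ≤ ‖r‖ * (‖coeff (n + 1) f * r ^ n‖ * ‖((n : ℝ) + 1)‖) := by gcongr
    _ = ‖r‖ * ‖coeff n (d⁄dX ℝ f) * r ^ n‖ := by
        rw [coeff_derivative, ← norm_mul]; ring_nf

theorem iterate_derivative_of_le {j k : ℕ} (hf : AbsSummableAt ((d⁄dX ℝ)^[k] f) r)
    (hjk : j ≤ k) : AbsSummableAt ((d⁄dX ℝ)^[j] f) r := by
  induction k, hjk using Nat.le_induction with
  | base => exact hf
  | succ k _ ih => exact ih (of_derivative (by rwa [← Function.iterate_succ_apply' (d⁄dX ℝ)]))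

theorem derivative_of_norm_lt {r' : ℝ} (hf : AbsSummableAt f r') (hr : ‖r‖ < ‖r'‖) :
    AbsSummableAt (d⁄dX ℝ f) r := by
  set t := ‖r‖ / ‖r'‖
  have hr' : 0 < ‖r'‖ := (norm_nonneg r).trans_lt hr
  have ht : ‖t‖ < 1 := by
    rwa [Real.norm_of_nonneg (by positivity), div_lt_one hr']
  set M := ∑' n, ‖coeff n f * r' ^ n‖
  have hM : ∀ n, ‖coeff n f * r' ^ n‖ ≤ M := fun n =>
    Summable.le_tsum hf n fun _ _ => norm_nonneg _
  have hgeom : Summable fun n : ℕ => ((n : ℝ) + 1) * t ^ n := by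
    simpa [add_mul] using
      (summable_pow_mul_geometric_of_norm_lt_one 1 ht).add (summable_geometric_of_norm_lt_one ht)
  refine (hgeom.mul_left (M / ‖r'‖)).of_nonneg_of_le (fun _ => norm_nonneg _) fun n => ?_
  calc ‖coeff n (d⁄dX ℝ f) * r ^ n‖
      = ‖coeff (n + 1) f * r' ^ (n + 1)‖ / ‖r'‖ * ((n + 1) * t ^ n) := by
        rw [coeff_derivative, norm_mul, norm_mul, norm_mul, norm_pow, norm_pow, div_pow,
          Real.norm_of_nonneg (by positivity : (0 : ℝ) ≤ n + 1)]
        field_simp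
        ring
    _ ≤ M / ‖r'‖ * ((n + 1) * t ^ n) := by gcongr; exact hM _

theorem iterate_derivative_of_norm_lt {r' : ℝ} (hf : AbsSummableAt f r') (j : ℕ) :
    ∀ {r : ℝ}, ‖r‖ < ‖r'‖ → AbsSummableAt ((d⁄dX ℝ)^[j] f) r := by
  induction j with
  | zero => exact fun hr => of_derivative (derivative_of_norm_lt hf hr)
  | succ j ih =>
    intro r hr
    obtain ⟨s, hrs, hsr'⟩ := exists_between hr
    have hs : ‖s‖ = s := Real.norm_of_nonneg ((norm_nonneg r).trans hrs.le)
    rw [Function.iterate_succ_apply']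
    exact derivative_of_norm_lt (ih (by rwa [hs])) (by rwa [hs])

theorem iterate_derivative_mul {d : ℕ}
    (hf : ∀ j ≤ d, AbsSummableAt ((d⁄dX ℝ)^[j] f) r)
    (hg : ∀ j ≤ d, AbsSummableAt ((d⁄dX ℝ)^[j] g) r) :
    ∀ j ≤ d, AbsSummableAt ((d⁄dX ℝ)^[j] (f * g)) r := by
  induction d generalizing f g with
  | zero =>
    intro j hj
    obtain rfl : j = 0 := by omega
    exact (hf 0 le_rfl).mul (hg 0 le_rfl)
  | succ d ih =>
    rintro (_ | j) hj
    · exact (hf 0 (Nat.zero_le _)).mul (hg 0 (Nat.zero_le _))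
    · have hf' : ∀ i ≤ d, AbsSummableAt ((d⁄dX ℝ)^[i] (d⁄dX ℝ f)) r := fun i hi => by
        rw [← Function.iterate_succ_apply]; exact hf _ (by omega)
      have hg' : ∀ i ≤ d, AbsSummableAt ((d⁄dX ℝ)^[i] (d⁄dX ℝ g)) r := fun i hi => by
        rw [← Function.iterate_succ_apply]; exact hg _ (by omega)
      rw [Function.iterate_succ_apply, Derivation.leibniz, smul_eq_mul, smul_eq_mul,
        iterate_map_add]
      exact (ih (fun i hi => hf i (by omega)) hg' j (by omega)).add
        (ih (fun i hi => hg i (by omega)) hf' j (by omega))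

theorem iterate_derivative_mk {A : ℕ → ℝ} {k : ℕ}
    (hA : Summable fun p => (p.descFactorial k : ℝ) * ‖A p‖ * ‖r‖ ^ (p - k)) :
    AbsSummableAt ((d⁄dX ℝ)^[k] (mk A)) r :=
  ((summable_nat_add_iff k).2 hA).congr fun n => by
    rw [coeff_iterate_derivative, coeff_mk, ← Nat.add_descFactorial_eq_ascFactorial,
      Nat.add_sub_cancel, norm_mul, norm_mul, norm_pow, RCLike.norm_natCast]

theorem iterate_derivative_mk_iterCoeff {x : ℕ → ℕ → ℝ} {A : ℕ → ℝ} {k : ℕ}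
    (hx : ∀ a < k, ∀ j, AbsSummableAt ((d⁄dX ℝ)^[j] (mk (x a))) r)
    (hA : AbsSummableAt ((d⁄dX ℝ)^[k] (mk A)) r) :
    ∀ a ≤ k, ∀ j ≤ k - a, AbsSummableAt ((d⁄dX ℝ)^[j] (mk (iterCoeff x A a))) r := by
  intro a
  induction a with
  | zero => exact fun _ j hj => hA.iterate_derivative_of_le hj
  | succ a ih =>
    intro ha
    rw [iterCoeff, mk_applyDCoeff]
    refine iterate_derivative_mul (fun j _ => hx a ha j) fun j hj => ?_
    rw [← Function.iterate_succ_apply]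
    exact ih (by omega) _ (by omega)

end AbsSummableAt

end PowerSeries

theorem iterated_derivation_estimate_general
    {X : Type*} [NormedAddCommGroup X] [NormedSpace ℝ X]
    (r₀ r : ℝ) (hr : 0 < r) (hrr₀ : r < r₀) (k : ℕ)
    (V : ℕ → FormalMultilinearSeries ℝ X X)
    (hVsum : ∀ a < k, ∀ r' : ℝ, 0 ≤ r' → r' < r₀ →
      Summable fun q : ℕ => ‖V a q‖ * r' ^ q)
    (f : FormalMultilinearSeries ℝ X ℝ)
    (hfk : Summable fun p : ℕ => (p.descFactorial k : ℝ) * ‖f p‖ * r ^ (p - k))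
    (fs : ℕ → FormalMultilinearSeries ℝ X ℝ)
    (hfs0 : fs 0 = f)
    (hsym : ∀ a ≤ k, ∀ (m : ℕ) (σ : Equiv.Perm (Fin m)) (φ : Fin m → X),
      fs a m (fun i => φ (σ i)) = fs a m φ)
    (hstep : ∀ a < k, ∀ (m : ℕ) (φ : X),
      fs (a + 1) m (fun _ => φ) =
        ∑ p ∈ Finset.range (m + 2),
          (p : ℝ) * fs a p
            (fun i => if (i : ℕ) = 0 then V a (m + 1 - p) (fun _ => φ) else φ)) :
    Summable (fun m : ℕ => ‖fs k m‖ * r ^ m) ∧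
    Summable (fun m : ℕ => iterCoeff (fun a q => ‖V a q‖) (fun p => ‖f p‖) k m * r ^ m) ∧
    (∑' m : ℕ, ‖fs k m‖ * r ^ m) ≤
      ∑' m : ℕ, iterCoeff (fun a q => ‖V a q‖) (fun p => ‖f p‖) k m * r ^ m := by
  subst hfs0
  set c := iterCoeff (fun a q => ‖V a q‖) (fun p => ‖fs 0 p‖) k
  have hV : ∀ a < k, ∀ j, AbsSummableAt ((d⁄dX ℝ)^[j] (mk fun q => ‖V a q‖)) r := by
    intro a ha j
    have hr' : AbsSummableAt (mk fun q => ‖V a q‖) ((r + r₀) / 2) := by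
      refine (hVsum a ha ((r + r₀) / 2) (by linarith) (by linarith)).congr fun q => ?_
      rw [coeff_mk, norm_mul, norm_norm, norm_pow, Real.norm_of_nonneg (by linarith)]
    refine hr'.iterate_derivative_of_norm_lt j ?_
    rw [Real.norm_of_nonneg hr.le, Real.norm_of_nonneg (by linarith)]
    linarith
  have hf : AbsSummableAt ((d⁄dX ℝ)^[k] (mk fun p => ‖fs 0 p‖)) r :=
    AbsSummableAt.iterate_derivative_mk (by simpa [Real.norm_of_nonneg hr.le] using hfk)
  have hc : Summable fun m => c m * r ^ m := by
    have := AbsSummableAt.iterate_derivative_mk_iterCoeff hV hf k le_rfl 0 (Nat.zero_le _)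
    exact .of_norm (by simpa only [AbsSummableAt, Function.iterate_zero_apply, coeff_mk] using this)
  have hle : ∀ m, ‖fs k m‖ * r ^ m ≤ c m * r ^ m := fun m =>
    mul_le_mul_of_nonneg_right (norm_le_iterCoeff V fs hsym hstep k le_rfl m) (by positivity)
  have hfs : Summable fun m => ‖fs k m‖ * r ^ m :=
    hc.of_nonneg_of_le (fun m => by positivity) hle
  exact ⟨hfs, hc, hfs.tsum_le_tsum hle hc⟩

/-- **Iterated derivation estimate.** Let `V₁,…,V_k` be analytic vector fields
on a Banach space `X` with `[[V_a]](r') < ∞` for all `r' < r₀`, and `f` a formal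
series with `[[f]]^(k)(r) < ∞`, `0 < r < r₀`. If `fs 0 = f` and each `fs (a+1)`
represents the derivation `V_{a+1}·(fs a)` (symmetric components, diagonal
formula), then `[[V_k·⋯V₁·f]](r) ≤ ([[V_k]]·⋯[[V₁]]·[[f]])(r)`, where the right
hand side is the power series with coefficients `iterCoeff`. -/
theorem iterated_derivation_estimate
    {X : Type*} [NormedAddCommGroup X] [NormedSpace ℝ X] [CompleteSpace X]
    (r₀ r : ℝ) (hr : 0 < r) (hrr₀ : r < r₀) (k : ℕ) (hk : 1 ≤ k)
    (V : ℕ → FormalMultilinearSeries ℝ X X)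
    (hVsym : ∀ a < k, ∀ (q : ℕ) (σ : Equiv.Perm (Fin q)) (φ : Fin q → X),
      V a q (fun i => φ (σ i)) = V a q φ)
    (hVsum : ∀ a < k, ∀ r' : ℝ, 0 ≤ r' → r' < r₀ →
      Summable fun q : ℕ => ‖V a q‖ * r' ^ q)
    (f : FormalMultilinearSeries ℝ X ℝ)
    (hfk : Summable fun p : ℕ => (p.descFactorial k : ℝ) * ‖f p‖ * r ^ (p - k))
    (fs : ℕ → FormalMultilinearSeries ℝ X ℝ)
    (hfs0 : fs 0 = f)
    (hsym : ∀ a ≤ k, ∀ (m : ℕ) (σ : Equiv.Perm (Fin m)) (φ : Fin m → X),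
      fs a m (fun i => φ (σ i)) = fs a m φ)
    (hstep : ∀ a < k, ∀ (m : ℕ) (φ : X),
      fs (a + 1) m (fun _ => φ) =
        ∑ p ∈ Finset.range (m + 2),
          (p : ℝ) * fs a p
            (fun i => if (i : ℕ) = 0 then V a (m + 1 - p) (fun _ => φ) else φ)) :
    Summable (fun m : ℕ => ‖fs k m‖ * r ^ m) ∧
    Summable (fun m : ℕ => iterCoeff (fun a q => ‖V a q‖) (fun p => ‖f p‖) k m * r ^ m) ∧
    (∑' m : ℕ, ‖fs k m‖ * r ^ m) ≤
      ∑' m : ℕ, iterCoeff (fun a q => ‖V a q‖) (fun p => ‖f p‖) k m * r ^ m :=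
  iterated_derivation_estimate_general r₀ r hr hrr₀ k V hVsum f hfk fs hfs0 hsym hstep
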